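/- Fix p, q, n ∈ ℕ⁺, α ∈ ℕ^p and β ∈ ℕ^q, and let N ∈ ℕ satisfy N ≤ n and max{|α|, |β|} ≤ N ≤ |α| + |β|. Then the set L_N = {γ ∈ L(α,β,n) : |γ| = N} is nonempty. -/
import Mathlib


/-- The set `L(α,β,n)` of matrices `γ : {0,…,p} × {0,…,q} → ℕ` with `γ₀₀ = 0`,
total sum `|γ| ≤ n`, row sums `α_i` for `i ∈ {1,…,p}` and column sums `β_j`
for `j ∈ {1,…,q}`. -/
def Lset (p q n : ℕ) (α : Fin p → ℕ) (β : Fin q → ℕ) :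
    Set (Fin (p + 1) → Fin (q + 1) → ℕ) :=
  {γ | γ 0 0 = 0 ∧
       (∑ i, ∑ j, γ i j) ≤ n ∧
       (∀ i : Fin p, ∑ j, γ i.succ j = α i) ∧
       (∀ j : Fin q, ∑ i, γ i j.succ = β j)}

/-- The subset `L_N = {γ ∈ L(α,β,n) : |γ| = N}`. -/
def LN (p q n : ℕ) (α : Fin p → ℕ) (β : Fin q → ℕ) (N : ℕ) :
    Set (Fin (p + 1) → Fin (q + 1) → ℕ) :=
  {γ ∈ Lset p q n α β | (∑ i, ∑ j, γ i j) = N}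

/-- There is an interior matrix with row sums ≤ α, column sums ≤ β, total `k`,
provided `k ≤ min |α| |β|`. -/
lemma exists_interior (p q : ℕ) (α : Fin p → ℕ) (β : Fin q → ℕ) :
    ∀ k : ℕ, k ≤ min (∑ i, α i) (∑ j, β j) →
    ∃ M : Fin p → Fin q → ℕ,
      (∀ i, ∑ j, M i j ≤ α i) ∧ (∀ j, ∑ i, M i j ≤ β j) ∧
      (∑ i, ∑ j, M i j) = k := by
  intro k
  induction k with
  | zero => exact fun _ => ⟨fun _ _ => 0, by simp, by simp, by simp⟩
  | succ k ih =>
    intro hk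
    obtain ⟨M, hr, hc, ht⟩ := ih (le_trans (Nat.le_succ k) hk)
    have hkA : k < ∑ i, α i := lt_of_lt_of_le (Nat.lt_succ_self k) (le_trans hk (min_le_left _ _))
    have hkB : k < ∑ j, β j := lt_of_lt_of_le (Nat.lt_succ_self k) (le_trans hk (min_le_right _ _))
    have hrow : ∃ i, ∑ j, M i j < α i := by
      by_contra h
      push_neg at h
      have : ∑ i, α i ≤ ∑ i, ∑ j, M i j := Finset.sum_le_sum fun i _ => h i
      omega
    have hcol : ∃ j, ∑ i, M i j < β j := by
      by_contra h
      push_neg at h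
      have : ∑ j, β j ≤ ∑ j, ∑ i, M i j := Finset.sum_le_sum fun j _ => h j
      rw [Finset.sum_comm] at this
      omega
    obtain ⟨i₀, hi₀⟩ := hrow
    obtain ⟨j₀, hj₀⟩ := hcol
    refine ⟨fun a b => M a b + (if a = i₀ then (if b = j₀ then 1 else 0) else 0), ?_, ?_, ?_⟩
    · intro i
      rcases eq_or_ne i i₀ with rfl | h
      · simpa [Finset.sum_add_distrib] using hi₀
      · simp [h, hr i]
    · intro j
      by_cases h : j = j₀
      · subst h
        rw [Finset.sum_add_distrib]
        have h2 : (∑ a : Fin p, if a = i₀ then (if j = j then 1 else 0) else 0) = 1 := by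
          simp
        rw [h2]
        omega
      · simp [h, hc j]
    · have : ∀ a, (∑ b, (M a b + if a = i₀ then (if b = j₀ then 1 else 0) else 0))
          = (∑ b, M a b) + (if a = i₀ then 1 else 0) := by
        intro a
        rcases eq_or_ne a i₀ with rfl | h
        · simp [Finset.sum_add_distrib]
        · simp [h]
      simp only [this, Finset.sum_add_distrib, ht]
      simp

/-- Theorem: `L_N` is nonempty when `max{|α|,|β|} ≤ N ≤ |α|+|β|`, `N ≤ n`. -/
theorem LN_nonempty
    (p q n : ℕ) (hp : 0 < p) (hq : 0 < q) (hn : 0 < n)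
    (α : Fin p → ℕ) (β : Fin q → ℕ) (N : ℕ)
    (hNn : N ≤ n)
    (hlow : max (∑ i, α i) (∑ j, β j) ≤ N)
    (hhigh : N ≤ (∑ i, α i) + (∑ j, β j)) :
    (LN p q n α β N).Nonempty := by
  set A := ∑ i, α i with hA
  set B := ∑ j, β j with hB
  have hAN : A ≤ N := le_trans (le_max_left _ _) hlow
  have hBN : B ≤ N := le_trans (le_max_right _ _) hlow
  set k := A + B - N with hkdef
  have hkA : k ≤ A := by omega
  have hkB : k ≤ B := by omega
  obtain ⟨M, hr, hc, ht⟩ := exists_interior p q α β k (le_min hkA hkB)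
  set γ : Fin (p + 1) → Fin (q + 1) → ℕ :=
    fun i => Fin.cases
      (Fin.cases 0 (fun j' => β j' - ∑ a, M a j'))
      (fun i' => Fin.cases (α i' - ∑ b, M i' b) (fun j' => M i' j')) i with hγ
  have hrow : ∀ i : Fin p, ∑ j, γ i.succ j = α i := by
    intro i
    rw [Fin.sum_univ_succ]
    simp only [hγ, Fin.cases_zero, Fin.cases_succ]
    have := hr i
    omega
  have hcol : ∀ j : Fin q, ∑ i, γ i j.succ = β j := by
    intro j
    rw [Fin.sum_univ_succ]
    simp only [hγ, Fin.cases_zero, Fin.cases_succ]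
    have := hc j
    omega
  have hcolsum : ∑ j, ∑ a, M a j = k := by rw [Finset.sum_comm]; exact ht
  have htotal : ∑ i, ∑ j, γ i j = N := by
    rw [Fin.sum_univ_succ]
    have h0 : ∑ j, γ 0 j = B - k := by
      rw [Fin.sum_univ_succ]
      simp only [hγ, Fin.cases_zero, Fin.cases_succ]
      rw [Nat.zero_add, ← hcolsum, hB, ← Finset.sum_tsub_distrib]
      exact fun j _ => hc j
    rw [h0]
    have h1 : ∑ i : Fin p, ∑ j, γ i.succ j = A := by
      rw [hA]; exact Finset.sum_congr rfl fun i _ => hrow i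
    rw [h1]
    omega
  refine ⟨γ, ⟨?_, ?_, hrow, hcol⟩, htotal⟩
  · simp [hγ]
  · rw [htotal]; exact hNn
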